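/- arXiv:1104.2172 — 3 statements merged into one kernel-verified Lean document; each statement's English description precedes it below -/
import Mathlib

section
/- Let Λ ⊆ ℤ be a sampling sequence for PW_S with lower bound B ≤ 1: B‖f‖² ≤ Σ_{λ∈Λ}|f(λ)|² for all f ∈ PW_S. Then for every finite trigonometric polynomial P(t) = Σ_{γ∈ℤ∖Λ} a_γ e^{iγt} (finitely supported coefficients), one has (B/2)·Σ|a_γ|² ≤ ‖P‖²_{L²([0,2π]∖S)}. -/
open MeasureTheory

def IsPW (S : Set ℝ) (f : ℝ → ℂ) : Prop :=
  ∃ g : ℝ → ℂ, Integrable g ∧ MemLp g 2 ∧ (∀ t, t ∉ S → g t = 0) ∧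
    ∀ x : ℝ, f x = ∫ t : ℝ, Complex.exp (Complex.I * x * t) * g t

/-!
Let `P` be the trigonometric polynomial, `E = (0, 2π] ∩ S` and `D = (0, 2π] \ S`. The function
`f x = ∫_E e^{ixt} conj (P t) dt` lies in `PW_S`, and Plancherel gives `‖f‖² = 2π ∫_E |P|²`.
Since the frequencies of `P` avoid `Λ`, the integral of `e^{iλt} conj (P t)` over `(0, 2π]`
vanishes for `λ ∈ Λ`, so `f λ = -∫_D e^{iλt} conj (P t) dt`; by Parseval on `(0, 2π]` the samples
then satisfy `∑_Λ |f λ|² ≤ 2π ∫_D |P|²`. The sampling inequality thus gives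
`B ∫_E |P|² ≤ ∫_D |P|²`, and as `B ≤ 1`,
`2π B ∑ |a_γ|² = B ∫_E |P|² + B ∫_D |P|² ≤ 2 ∫_D |P|²`.
-/

open Set Complex
open scoped Real ENNReal ComplexConjugate

theorem lintegral_eq_setLIntegral_Ioc_tsum_intCast_add {f : ℝ → ℝ≥0∞} (hf : Measurable f) :
    ∫⁻ x, f x = ∫⁻ s in Ioc 0 1, ∑' n : ℤ, f (n + s) := by
  rw [lintegral_tsum (f := fun (n : ℤ) s => f (n + s))
    fun n => (hf.comp (measurable_const_add _)).aemeasurable]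
  let e : ℤ ≃ AddSubgroup.zmultiples (1 : ℝ) :=
    Equiv.ofBijective (fun n => ⟨n, AddSubgroup.intCast_mem_zmultiples_one n⟩)
      ⟨fun m n h => by simpa using h, fun ⟨x, k, hk⟩ => ⟨k, by ext; simp [← hk]⟩⟩
  rw [(isAddFundamentalDomain_Ioc zero_lt_one (0:ℝ) volume).lintegral_eq_tsum'' f, zero_add,
    ← e.tsum_eq]
  rfl

theorem integral_eq_of_hasSum_intCast_add {u : ℝ → ℝ} {V : ℝ} (hu : Measurable u)
    (hu0 : ∀ x, 0 ≤ u x) (h : ∀ s, HasSum (fun n : ℤ => u (n + s)) V) : ∫ x, u x = V := by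
  have hV : 0 ≤ V := (h 0).nonneg fun n => hu0 _
  have hsum : ∀ s, ∑' n : ℤ, ENNReal.ofReal (u (n + s)) = ENNReal.ofReal V := fun s => by
    rw [← ENNReal.ofReal_tsum_of_nonneg (fun n => hu0 _) (h s).summable, (h s).tsum_eq]
  rw [integral_eq_lintegral_of_nonneg_ae (ae_of_all _ hu0) hu.aestronglyMeasurable,
    lintegral_eq_setLIntegral_Ioc_tsum_intCast_add (f := fun x => ENNReal.ofReal (u x))
      (ENNReal.measurable_ofReal.comp hu)]
  simp only [hsum, setLIntegral_const, Real.volume_Ioc, sub_zero,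
    ENNReal.ofReal_one, mul_one, ENNReal.toReal_ofReal hV]

theorem isFiniteMeasure_restrict_of_subset_Ioc {W : Set ℝ} {a b : ℝ} (hW : W ⊆ Ioc a b) :
    IsFiniteMeasure (volume.restrict W) :=
  isFiniteMeasure_restrict.2 ((measure_mono hW).trans_lt measure_Ioc_lt_top).ne

theorem norm_cexp_I_mul_ofReal_mul_ofReal (x t : ℝ) : ‖cexp (I * x * t)‖ = 1 := by
  rw [mul_assoc, ← ofReal_mul, norm_exp_I_mul_ofReal]

theorem hasSum_norm_sq_setIntegral_cexp_mul {W : Set ℝ} (hW : MeasurableSet W)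
    (hWsub : W ⊆ Ioc 0 (2 * π)) {h : ℝ → ℂ} (hh : MemLp h 2 (volume.restrict W)) :
    HasSum (fun n : ℤ => ‖∫ t in W, cexp (I * n * t) * h t‖ ^ 2)
      (2 * π * ∫ t in W, ‖h t‖ ^ 2) := by
  have hπ : 0 < 2 * π := by positivity
  have hL2 : MemLp (W.indicator h) 2 (volume.restrict (Ioc 0 (2 * π))) :=
    ((memLp_indicator_iff_restrict hW).2 hh).restrict _
  -- `fourierCoeffOn` integrates against `e^{-int}`, hence the reindexing `n ↦ -n` below.
  have hcoeff : ∀ n : ℤ, fourierCoeffOn hπ (W.indicator h) (-n)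
      = (2 * π : ℂ)⁻¹ * ∫ t in W, cexp (I * n * t) * h t := by
    intro n
    have hexp : ∀ x : ℝ, cexp (2 * π * I * n * x / ↑(2 * π)) = cexp (I * n * x) := fun x => by
      congr 1; push_cast; field_simp
    rw [fourierCoeffOn_eq_integral, intervalIntegral.integral_of_le hπ.le]
    simp only [sub_zero, neg_neg, fourier_coe_apply, smul_eq_mul, hexp,
      ← indicator_mul_right _ (fun x : ℝ => cexp (I * n * x)), setIntegral_indicator hW,
      inter_eq_right.2 hWsub, real_smul]
    push_cast; ring
  have hnorm : ∀ x, ‖W.indicator h x‖ ^ 2 = W.indicator (fun t => ‖h t‖ ^ 2) x := fun x => by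
    by_cases hx : x ∈ W <;> simp [hx]
  have hterm : ∀ n : ℤ, ‖∫ t in W, cexp (I * n * t) * h t‖ ^ 2
      = (2 * π) ^ 2 * ‖fourierCoeffOn hπ (W.indicator h) (-n)‖ ^ 2 := fun n => by
    rw [hcoeff, norm_mul, norm_inv, show ‖(2 * π : ℂ)‖ = 2 * π by simp [Real.pi_pos.le]]
    field_simp
  have hval : ∫ x in 0..2 * π, ‖W.indicator h x‖ ^ 2 = ∫ t in W, ‖h t‖ ^ 2 := by
    rw [intervalIntegral.integral_of_le hπ.le]
    simp only [hnorm, setIntegral_indicator hW, inter_eq_right.2 hWsub]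
  have hsum : (2 * π) ^ 2 * ((2 * π - 0)⁻¹ • ∫ x in 0..2 * π, ‖W.indicator h x‖ ^ 2)
      = 2 * π * ∫ t in W, ‖h t‖ ^ 2 := by
    rw [hval, sub_zero, smul_eq_mul]
    field_simp
  exact hsum ▸ (((Equiv.neg ℤ).hasSum_iff.2 (hasSum_sq_fourierCoeffOn hπ hL2)).mul_left
    ((2 * π) ^ 2)).congr_fun hterm

/-- Periodization: `∫_ℝ |f|² = ∫_0^1 ∑_n |f (n + s)|² ds`, and for fixed `s` the inner sum is
Parseval's identity for `t ↦ e^{ist} h t`. -/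
theorem integral_norm_sq_setIntegral_cexp_mul {W : Set ℝ} (hW : MeasurableSet W)
    (hWsub : W ⊆ Ioc 0 (2 * π)) {h : ℝ → ℂ} (hh : MemLp h 2 (volume.restrict W)) :
    ∫ x : ℝ, ‖∫ t in W, cexp (I * x * t) * h t‖ ^ 2 = 2 * π * ∫ t in W, ‖h t‖ ^ 2 := by
  have := isFiniteMeasure_restrict_of_subset_Ioc hWsub
  have hcexp : ∀ x : ℝ, Continuous fun t : ℝ => cexp (I * x * t) := fun x => by fun_prop
  have hcont : Continuous fun x : ℝ => ∫ t in W, cexp (I * x * t) * h t := by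
    refine continuous_of_dominated (bound := fun t => ‖h t‖)
      (fun x => (hcexp x).aestronglyMeasurable.mul hh.1) (fun x => ae_of_all _ fun t => ?_)
      (hh.integrable one_le_two).norm (ae_of_all _ fun t => by fun_prop)
    rw [norm_mul, norm_cexp_I_mul_ofReal_mul_ofReal, one_mul]
  refine integral_eq_of_hasSum_intCast_add (hcont.norm.pow 2).measurable (fun _ => by positivity)
    fun s => ?_
  have hh' : MemLp (fun t : ℝ => cexp (I * s * t) * h t) 2 (volume.restrict W) :=
    hh.congr_norm ((hcexp s).aestronglyMeasurable.mul hh.1)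
      (ae_of_all _ fun t => by
        simp only [norm_mul, norm_cexp_I_mul_ofReal_mul_ofReal, one_mul])
  convert hasSum_norm_sq_setIntegral_cexp_mul hW hWsub hh' using 1
  · funext n
    simp_rw [← mul_assoc, ← exp_add]
    push_cast
    ring_nf
  · simp_rw [norm_mul, norm_cexp_I_mul_ofReal_mul_ofReal, one_mul]

theorem setIntegral_Ioc_cexp_I_mul_intCast (m : ℤ) :
    ∫ t in Ioc 0 (2 * π), cexp (I * m * t) = if m = 0 then (2 * π : ℂ) else 0 := by
  split_ifs with hm
  · simp [hm, Real.volume_real_Ioc, Real.pi_pos.le]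
  · have hIm : I * m ≠ 0 := mul_ne_zero I_ne_zero (Int.cast_ne_zero.2 hm)
    rw [← intervalIntegral.integral_of_le (by positivity), integral_exp_mul_complex hIm,
      show I * m * ↑(2 * π) = m * (2 * π * I) by push_cast; ring, exp_int_mul_two_pi_mul_I]
    simp

noncomputable def trigPoly (F : Finset ℤ) (a : ℤ → ℂ) (t : ℝ) : ℂ := ∑ γ ∈ F, a γ * cexp (I * γ * t)

section trigPoly

variable (F : Finset ℤ) (a : ℤ → ℂ)

@[fun_prop]
theorem continuous_trigPoly : Continuous (trigPoly F a) := by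
  unfold trigPoly; fun_prop

theorem norm_trigPoly_le (t : ℝ) : ‖trigPoly F a t‖ ≤ ∑ γ ∈ F, ‖a γ‖ :=
  (norm_sum_le _ _).trans <| Finset.sum_le_sum fun γ _ => by
    rw [norm_mul, ← ofReal_intCast, norm_cexp_I_mul_ofReal_mul_ofReal, mul_one]

theorem memLp_conj_trigPoly (p : ℝ≥0∞) (μ : Measure ℝ) [IsFiniteMeasure μ] :
    MemLp (fun t => conj (trigPoly F a t)) p μ :=
  MemLp.of_bound (continuous_trigPoly F a).star.aestronglyMeasurable _
    (ae_of_all _ fun t => (RCLike.norm_conj _).trans_le (norm_trigPoly_le F a t))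

theorem setIntegral_cexp_mul_conj_trigPoly (n : ℤ) :
    ∫ t in Ioc 0 (2 * π), cexp (I * n * t) * conj (trigPoly F a t)
      = if n ∈ F then 2 * π * conj (a n) else 0 := by
  have hterm : ∀ (γ : ℤ) (t : ℝ), cexp (I * n * t) * conj (a γ * cexp (I * γ * t))
      = conj (a γ) * cexp (I * (n - γ : ℤ) * t) := fun γ t => by
    rw [map_mul, ← exp_conj, mul_left_comm, ← exp_add]
    congr 2
    simp only [map_mul, conj_I, map_intCast, conj_ofReal]
    push_cast; ring
  simp_rw [trigPoly, map_sum, Finset.mul_sum, hterm]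
  rw [integral_finsetSum _ fun γ _ => (by fun_prop : Continuous _).integrableOn_Ioc]
  simp_rw [integral_const_mul, setIntegral_Ioc_cexp_I_mul_intCast, sub_eq_zero, mul_ite, mul_zero]
  rw [Finset.sum_ite_eq]
  split_ifs <;> ring

theorem integral_norm_sq_trigPoly :
    ∫ t in Ioc 0 (2 * π), ‖trigPoly F a t‖ ^ 2 = 2 * π * ∑ γ ∈ F, ‖a γ‖ ^ 2 := by
  have hπ : 0 < 2 * π := by positivity
  have := isFiniteMeasure_restrict_of_subset_Ioc (subset_refl (Ioc 0 (2 * π)))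
  have hparseval := hasSum_norm_sq_setIntegral_cexp_mul measurableSet_Ioc subset_rfl
    (memLp_conj_trigPoly F a 2 _)
  simp only [setIntegral_cexp_mul_conj_trigPoly, RCLike.norm_conj] at hparseval
  have hcoeff : HasSum (fun n : ℤ => ‖if n ∈ F then 2 * π * conj (a n) else 0‖ ^ 2)
      (∑ γ ∈ F, ‖if γ ∈ F then 2 * π * conj (a γ) else 0‖ ^ 2) :=
    hasSum_sum_of_ne_finset_zero fun n hn => by simp [hn]
  have hsum : ∑ γ ∈ F, ‖if γ ∈ F then 2 * π * conj (a γ) else 0‖ ^ 2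
      = (2 * π) ^ 2 * ∑ γ ∈ F, ‖a γ‖ ^ 2 := by
    rw [Finset.mul_sum]
    refine Finset.sum_congr rfl fun γ hγ => ?_
    rw [if_pos hγ, norm_mul, RCLike.norm_conj, mul_pow]
    simp [Real.pi_pos.le]
  have := hparseval.unique hcoeff
  rw [hsum, pow_two] at this
  exact mul_left_cancel₀ hπ.ne' (this.trans (mul_assoc _ _ _))

end trigPoly

theorem mul_setIntegral_norm_sq_trigPoly_le_of_sampling {S : Set ℝ} (hS : MeasurableSet S)
    {Λ : Set ℤ} {B : ℝ}
    (hsamp : ∀ f : ℝ → ℂ, IsPW S f → B * ∫ x : ℝ, ‖f x‖ ^ 2 ≤ ∑' l : Λ, ‖f ((l : ℤ) : ℝ)‖ ^ 2)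
    {F : Finset ℤ} (hF : ∀ γ ∈ F, γ ∉ Λ) (a : ℤ → ℂ) :
    B * ∫ t in Ioc 0 (2 * π) ∩ S, ‖trigPoly F a t‖ ^ 2
      ≤ ∫ t in Ioc 0 (2 * π) \ S, ‖trigPoly F a t‖ ^ 2 := by
  set E := Ioc 0 (2 * π) ∩ S
  set D := Ioc 0 (2 * π) \ S
  have hE : MeasurableSet E := measurableSet_Ioc.inter hS
  have hD : MeasurableSet D := measurableSet_Ioc.diff hS
  set q : ℝ → ℂ := fun t => conj (trigPoly F a t)
  have hq_cont : Continuous q := continuous_conj.comp (continuous_trigPoly F a)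
  have hq : ∀ W ⊆ Ioc 0 (2 * π), MemLp q 2 (volume.restrict W) := fun W hW =>
    have := isFiniteMeasure_restrict_of_subset_Ioc hW
    memLp_conj_trigPoly F a 2 _
  have hnorm_q : ∀ W : Set ℝ, ∫ t in W, ‖q t‖ ^ 2 = ∫ t in W, ‖trigPoly F a t‖ ^ 2 := fun W => by
    simp only [q, RCLike.norm_conj]
  set f : ℝ → ℂ := fun x => ∫ t : ℝ, cexp (I * x * t) * E.indicator q t
  have hf : ∀ x : ℝ, f x = ∫ t in E, cexp (I * x * t) * q t := fun x => by
    simp only [f, ← indicator_mul_right _ (fun t : ℝ => cexp (I * x * t)), integral_indicator hE]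
  have hPW : IsPW S f :=
    ⟨E.indicator q, (integrable_indicator_iff hE).2
      ((hq_cont.integrableOn_Ioc).mono_set inter_subset_left),
      (memLp_indicator_iff_restrict hE).2 (hq E inter_subset_left),
      fun t ht => indicator_of_notMem (fun htE => ht htE.2) _, fun x => rfl⟩
  have hf_L2 : ∫ x, ‖f x‖ ^ 2 = 2 * π * ∫ t in E, ‖trigPoly F a t‖ ^ 2 := by
    simp only [hf]
    rw [integral_norm_sq_setIntegral_cexp_mul hE inter_subset_left (hq E inter_subset_left),
      hnorm_q]
  have hf_sample : ∀ l : Λ, ‖f (l : ℤ)‖ = ‖∫ t in D, cexp (I * (l : ℤ) * t) * q t‖ := by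
    intro l
    have hsplit := integral_inter_add_sdiff (μ := volume) (s := Ioc (0 : ℝ) (2 * π))
      (f := fun t : ℝ => cexp (I * (l : ℤ) * t) * q t) hS
      (((by fun_prop : Continuous fun t : ℝ => cexp (I * (l : ℤ) * t)).mul
        hq_cont).integrableOn_Ioc)
    rw [setIntegral_cexp_mul_conj_trigPoly, if_neg fun hl => hF _ hl l.2] at hsplit
    rw [hf, ofReal_intCast, eq_neg_of_add_eq_zero_left hsplit, norm_neg]
  have hD_parseval := hasSum_norm_sq_setIntegral_cexp_mul hD sdiff_subset (hq D sdiff_subset)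
  have : 2 * π * (B * ∫ t in E, ‖trigPoly F a t‖ ^ 2) ≤ 2 * π * ∫ t in D, ‖trigPoly F a t‖ ^ 2 :=
    calc 2 * π * (B * ∫ t in E, ‖trigPoly F a t‖ ^ 2) = B * ∫ x, ‖f x‖ ^ 2 := by
          rw [hf_L2]; ring
      _ ≤ ∑' l : Λ, ‖f (l : ℤ)‖ ^ 2 := hsamp f hPW
      _ = ∑' l : Λ, ‖∫ t in D, cexp (I * (l : ℤ) * t) * q t‖ ^ 2 := by simp only [hf_sample]
      _ ≤ ∑' n : ℤ, ‖∫ t in D, cexp (I * n * t) * q t‖ ^ 2 :=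
          hD_parseval.summable.tsum_subtype_le _ Λ fun _ => by positivity
      _ = 2 * π * ∫ t in D, ‖trigPoly F a t‖ ^ 2 := by rw [hD_parseval.tsum_eq, hnorm_q]
  exact le_of_mul_le_mul_left this (by positivity)

theorem stmt_5_general (S : Set ℝ) (hmeas : MeasurableSet S)
    (Λ : Set ℤ) (B : ℝ) (hB1 : B ≤ 1)
    (hsamp : ∀ f : ℝ → ℂ, IsPW S f →
      B * ∫ x : ℝ, ‖f x‖ ^ 2 ≤ ∑' l : Λ, ‖f ((l : ℤ) : ℝ)‖ ^ 2) :
    ∀ (F : Finset ℤ), (∀ γ ∈ F, γ ∉ Λ) → ∀ a : ℤ → ℂ,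
      (B / 2) * ∑ γ ∈ F, ‖a γ‖ ^ 2 ≤
        (1 / (2 * Real.pi)) *
          ∫ t in Set.Icc 0 (2 * Real.pi) \ S,
            ‖∑ γ ∈ F, a γ * Complex.exp (Complex.I * γ * t)‖ ^ 2 := by
  intro F hF a
  change _ ≤ 1 / (2 * π) * ∫ t in Icc 0 (2 * π) \ S, ‖trigPoly F a t‖ ^ 2
  rw [setIntegral_congr_set (Ioc_ae_eq_Icc.symm.diff (ae_eq_refl S))]
  have hsplit := integral_inter_add_sdiff hmeas (s := Ioc 0 (2 * π)) (μ := volume)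
    (by fun_prop : Continuous fun t => ‖trigPoly F a t‖ ^ 2).integrableOn_Ioc
  rw [integral_norm_sq_trigPoly] at hsplit
  have hD : 0 ≤ ∫ t in Ioc 0 (2 * π) \ S, ‖trigPoly F a t‖ ^ 2 :=
    setIntegral_nonneg (measurableSet_Ioc.diff hmeas) fun _ _ => by positivity
  have key : B * (2 * π * ∑ γ ∈ F, ‖a γ‖ ^ 2)
      ≤ 2 * ∫ t in Ioc 0 (2 * π) \ S, ‖trigPoly F a t‖ ^ 2 := by
    rw [← hsplit, mul_add]
    exact (add_le_add (mul_setIntegral_norm_sq_trigPoly_le_of_sampling hmeas hsamp hF a)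
      (mul_le_of_le_one_left hD hB1)).trans_eq (two_mul _).symm
  rw [one_div, inv_mul_eq_div, le_div_iff₀ (by positivity)]
  linarith

/-- if `Λ` is sampling for `PW_S` with bound `B ≤ 1`, then every trig
polynomial with frequencies in `ℤ∖Λ` satisfies the lower Riesz bound `B/2` on
`L²([0,2π]∖S)` (normalized measure). -/
theorem stmt_5 (S : Set ℝ) (hS : S ⊆ Set.Icc 0 (2 * Real.pi)) (hmeas : MeasurableSet S)
    (Λ : Set ℤ) (B : ℝ) (hB : 0 < B) (hB1 : B ≤ 1)
    (hsamp : ∀ f : ℝ → ℂ, IsPW S f →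
      B * ∫ x : ℝ, ‖f x‖ ^ 2 ≤ ∑' l : Λ, ‖f ((l : ℤ) : ℝ)‖ ^ 2) :
    ∀ (F : Finset ℤ), (∀ γ ∈ F, γ ∉ Λ) → ∀ a : ℤ → ℂ,
      (B / 2) * ∑ γ ∈ F, ‖a γ‖ ^ 2 ≤
        (1 / (2 * Real.pi)) *
          ∫ t in Set.Icc 0 (2 * Real.pi) \ S,
            ‖∑ γ ∈ F, a γ * Complex.exp (Complex.I * γ * t)‖ ^ 2 :=
  stmt_5_general S hmeas Λ B hB1 hsamp
end

section
/- Let m ∈ ℕ, I ⊆ {0,...,m-1} with |I| = n, S = ∪_{r∈I}[2πr/m, 2π(r+1)/m], and J ⊆ {0,...,m-1} such that the submatrix F_I(J) = (e^{2πijr/m})_{j∈J, r∈I} satisfies ‖F_I(J)w‖² ≥ cn‖w‖² for all w ∈ C^I (for some c > 0). Then Λ = {j + km : j ∈ J, k ∈ ℤ} is a sampling sequence for PW_S with bound c·(n/m): c(n/m)‖f‖² ≤ Σ_{λ∈Λ}|f(λ)|² for all f ∈ PW_S. -/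
/-!
Write `f x = ∫ e^{ixt} g t dt` with `g` supported in the blocks `[rT, (r+1)T]`, `r ∈ I`, `T = 2π/m`.
Folding the blocks onto `(0, T]` turns the samples `f (j + km)`, `k ∈ ℤ`, into the Fourier
coefficients on `(0, T]` of `s ↦ e^{ijs} ∑_{r ∈ I} e^{2πijr/m} g (s + rT)`, so by Parseval
`∑_k |f (j + km)|² = T ∫₀ᵀ |∑_{r ∈ I} e^{2πijr/m} g (s + rT)|² ds`. Summing over `j ∈ J` and
applying the matrix bound pointwise to the vector `(g (s + rT))_{r ∈ I}` gives
`∑_{λ ∈ Λ} |f λ|² ≥ c n T ∫ |g|²`. The same folding with a single block of length `2π`, integrated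
over a period in `x`, gives Plancherel's identity `∫ |f|² = 2π ∫ |g|²`.
-/

open MeasureTheory

open Set Complex
open scoped Real

theorem hasSum_norm_sq_intervalIntegral_exp_mul {T : ℝ} (hT : 0 < T) {u : ℝ → ℂ}
    (hu : MemLp u 2 (volume.restrict (Ioc 0 T))) :
    HasSum (fun k : ℤ => ‖∫ t in (0)..T, exp (2 * π * I * k * t / T) * u t‖ ^ 2)
      (T * ∫ t in (0)..T, ‖u t‖ ^ 2) := by
  have hcoeff (k : ℤ) :
      ∫ t in (0)..T, exp (2 * π * I * k * t / T) * u t = T • fourierCoeffOn hT u (-k) := by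
    rw [fourierCoeffOn_eq_integral, sub_zero, smul_smul, mul_one_div_cancel hT.ne', one_smul]
    congr 1 with t
    rw [fourier_coe_apply, smul_eq_mul]
    push_cast
    ring_nf
  have hsum := ((Equiv.neg ℤ).hasSum_iff.2 (hasSum_sq_fourierCoeffOn hT hu)).mul_left (T ^ 2)
  have hval : T ^ 2 * ((T - 0)⁻¹ • ∫ t in (0)..T, ‖u t‖ ^ 2) = T * ∫ t in (0)..T, ‖u t‖ ^ 2 := by
    rw [sub_zero, smul_eq_mul]
    field_simp
  rw [hval] at hsum
  refine hsum.congr_fun fun k => ?_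
  simp [hcoeff, mul_pow, abs_of_pos hT]

theorem integral_eq_of_hasSum_comp_add_intCast {φ : ℝ → ℝ} (hφm : Measurable φ) (hφ : 0 ≤ φ)
    {C : ℝ} (hC : ∀ x, HasSum (fun n : ℤ => φ (x + n)) C) : ∫ x, φ x = C := by
  have hφm' : Measurable fun x => ENNReal.ofReal (φ x) := ENNReal.measurable_ofReal.comp hφm
  rw [integral_eq_lintegral_of_nonneg_ae (ae_of_all _ hφ) hφm.aestronglyMeasurable]
  suffices ∫⁻ x, ENNReal.ofReal (φ x) = ENNReal.ofReal C by
    rw [this, ENNReal.toReal_ofReal ((hC 0).nonneg fun n => hφ _)]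
  calc ∫⁻ x, ENNReal.ofReal (φ x)
      = ∑' n : ℤ, ∫⁻ x in Ioc (n : ℝ) (n + 1), ENNReal.ofReal (φ x) := by
        rw [← lintegral_iUnion (fun _ => measurableSet_Ioc) (pairwise_disjoint_Ioc_intCast ℝ),
          iUnion_Ioc_intCast, Measure.restrict_univ]
    _ = ∑' n : ℤ, ∫⁻ x in Ioc (0 : ℝ) 1, ENNReal.ofReal (φ (x + n)) := by
        refine tsum_congr fun n => ?_
        rw [← (measurePreserving_add_right volume (n : ℝ)).setLIntegral_comp_preimage_emb
          (measurableEmbedding_addRight _), preimage_add_const_Ioc, sub_self, add_sub_cancel_left]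
    _ = ∫⁻ x in Ioc (0 : ℝ) 1, ∑' n : ℤ, ENNReal.ofReal (φ (x + n)) :=
        (lintegral_tsum fun n => (hφm'.comp (measurable_add_const _)).aemeasurable).symm
    _ = ∫⁻ _ in Ioc (0 : ℝ) 1, ENNReal.ofReal C := by
        refine lintegral_congr fun x => ?_
        rw [← ENNReal.ofReal_tsum_of_nonneg (fun n => hφ _) (hC x).summable, (hC x).tsum_eq]
    _ = ENNReal.ofReal C := by simp [Real.volume_Ioc]

theorem integral_eq_sum_intervalIntegral_comp_add {E ι : Type*} [NormedAddCommGroup E]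
    [NormedSpace ℝ E] {h : ℝ → E} (hh : Integrable h) {T : ℝ} (hT : 0 ≤ T)
    {R : Finset ι} {a : ι → ℝ} (hdisj : (R : Set ι).PairwiseDisjoint fun r => Ioc (a r) (a r + T))
    (hsupp : ∀ᵐ t, t ∉ ⋃ r ∈ R, Ioc (a r) (a r + T) → h t = 0) :
    ∫ t, h t = ∑ r ∈ R, ∫ s in (0)..T, h (s + a r) := by
  rw [← setIntegral_eq_integral_of_ae_compl_eq_zero hsupp,
    integral_biUnion_finset R (fun _ _ => measurableSet_Ioc) hdisj fun _ _ => hh.integrableOn]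
  refine Finset.sum_congr rfl fun r _ => ?_
  rw [intervalIntegral.integral_comp_add_right, zero_add, add_comm T,
    intervalIntegral.integral_of_le (by linarith)]

theorem pairwiseDisjoint_Ioc_intCast_mul {ι : Type*} (T : ℝ) {R : Set ι} {ν : ι → ℤ}
    (hν : InjOn ν R) : R.PairwiseDisjoint fun r => Ioc (ν r * T) (ν r * T + T) := by
  intro r hr r' hr' hne
  have := pairwise_disjoint_Ioc_add_zsmul (0 : ℝ) T (hν.ne hr hr' hne)
  simpa only [Function.onFun, zero_add, zsmul_eq_mul, Int.cast_add, Int.cast_one, add_one_mul]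
    using this

theorem ae_notMem_iUnion_Ioc_of_notMem_iUnion_Icc {ι β : Type*} [Zero β] {g : ℝ → β}
    {R : Finset ι} {a b : ι → ℝ} (hg : ∀ t ∉ ⋃ r ∈ R, Icc (a r) (b r), g t = 0) :
    ∀ᵐ t, t ∉ ⋃ r ∈ R, Ioc (a r) (b r) → g t = 0 := by
  have hnull : ∀ᵐ t, t ∉ a '' R := (R.finite_toSet.image a).countable.ae_notMem _
  filter_upwards [hnull] with t ht htIoc
  refine hg t fun htIcc => htIoc ?_
  obtain ⟨r, hr, htr⟩ := mem_iUnion₂.1 htIcc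
  exact mem_biUnion hr ⟨htr.1.lt_of_ne fun h => ht ⟨r, hr, h⟩, htr.2⟩

theorem mul_sum_integral_norm_sq_le {α ι κ : Type*} [MeasurableSpace α] {μ : Measure α}
    {R : Finset ι} {J : Finset κ} {M : κ → ι → ℂ} {C : ℝ}
    (hM : ∀ w : ι → ℂ, C * ∑ r ∈ R, ‖w r‖ ^ 2 ≤ ∑ j ∈ J, ‖∑ r ∈ R, M j r * w r‖ ^ 2)
    {u : ι → α → ℂ} (hu : ∀ r ∈ R, MemLp (u r) 2 μ) :
    C * ∑ r ∈ R, ∫ s, ‖u r s‖ ^ 2 ∂μ ≤ ∑ j ∈ J, ∫ s, ‖∑ r ∈ R, M j r * u r s‖ ^ 2 ∂μ := by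
  have hsq {v : α → ℂ} (hv : MemLp v 2 μ) : Integrable (fun s => ‖v s‖ ^ 2) μ :=
    hv.integrable_norm_pow two_ne_zero
  have hMu (j : κ) : MemLp (fun s => ∑ r ∈ R, M j r * u r s) 2 μ :=
    memLp_finsetSum R fun r hr => (hu r hr).const_mul _
  rw [← integral_finsetSum _ fun r hr => hsq (hu r hr), ← integral_const_mul,
    ← integral_finsetSum _ fun j _ => hsq (hMu j)]
  exact integral_mono ((integrable_finsetSum _ fun r hr => hsq (hu r hr)).const_mul _)
    (integrable_finsetSum _ fun j _ => hsq (hMu j)) fun s => hM (u · s)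

theorem hasSum_setOf_add_mul {α : Type*} [AddCommMonoid α] [TopologicalSpace α]
    [ContinuousAdd α] {m : ℕ} (J : Finset (Fin m)) {φ : ℤ → α} {C : Fin m → α}
    (h : ∀ j ∈ J, HasSum (fun k : ℤ => φ ((j : ℕ) + k * m)) (C j)) :
    HasSum (fun l : {l : ℤ | ∃ j ∈ J, ∃ k : ℤ, l = (j : ℕ) + k * m} => φ l) (∑ j ∈ J, C j) := by
  have hset : {l : ℤ | ∃ j ∈ J, ∃ k : ℤ, l = (j : ℕ) + k * m}
      = ⋃ j ∈ J, range fun k : ℤ => (j : ℕ) + k * m := by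
    ext l
    simp [eq_comm]
  have hres (j : Fin m) (k : ℤ) : ((j : ℕ) + k * m : ℤ) % m = (j : ℕ) := by
    rw [Int.add_mul_emod_self_right, Int.emod_eq_of_lt (by positivity) (by exact_mod_cast j.isLt)]
  rw [hset]
  refine hasSum_sum_disjoint J ?_ fun j hj => ?_
  · rintro j - j' - hne
    refine disjoint_left.2 ?_
    rintro - ⟨k, rfl⟩ ⟨k', hk'⟩
    have hjj' := congrArg (· % (m : ℤ)) hk'
    simp only [hres, Nat.cast_inj] at hjj'
    exact hne (Fin.ext hjj'.symm)
  · have hm : (m : ℤ) ≠ 0 := by exact_mod_cast j.pos.ne'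
    refine (Function.Injective.hasSum_range_iff fun k k' hkk' => ?_).2 (h j hj)
    exact mul_right_cancel₀ hm (add_left_cancel hkk')

noncomputable def invFourier (g : ℝ → ℂ) (x : ℝ) : ℂ := ∫ t : ℝ, exp (I * x * t) * g t

theorem norm_exp_I_mul_mul (x t : ℝ) : ‖exp (I * x * t)‖ = 1 := by
  rw [mul_assoc, ← ofReal_mul, norm_exp_I_mul_ofReal]

theorem exp_I_mul_add_intCast_mul {T : ℝ} (hT : T ≠ 0) (x s : ℝ) (k n : ℤ) :
    exp (I * ↑(x + k * (2 * π / T)) * ↑(s + n * T))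
      = exp (2 * π * I * k * s / T) * exp (I * x * ↑(s + n * T)) := by
  rw [← exp_add, ← mul_one (exp (_ + _)), ← exp_int_mul_two_pi_mul_I (k * n), ← exp_add]
  have hT' : (T : ℂ) ≠ 0 := ofReal_ne_zero.2 hT
  congr 1
  push_cast
  field_simp
  ring

section InvFourier

variable {g : ℝ → ℂ}

theorem continuous_invFourier (hg : Integrable g) : Continuous (invFourier g) :=
  continuous_of_dominated (fun x => (by fun_prop : Continuous _).aestronglyMeasurable.mul hg.1)
    (fun x => ae_of_all _ fun t => by simp [norm_exp_I_mul_mul]) hg.norm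
    (ae_of_all _ fun t => by fun_prop)

theorem MeasureTheory.Integrable.exp_I_mul_mul (hg : Integrable g) (x : ℝ) :
    Integrable fun t : ℝ => exp (I * x * t) * g t :=
  hg.norm.mono' ((by fun_prop : Continuous _).aestronglyMeasurable.mul hg.1)
    (ae_of_all _ fun t => by simp [norm_exp_I_mul_mul])

theorem MeasureTheory.MemLp.exp_I_mul_mul {p} (hg : MemLp g p) (x : ℝ) :
    MemLp (fun t : ℝ => exp (I * x * t) * g t) p :=
  hg.of_le ((by fun_prop : Continuous _).aestronglyMeasurable.mul hg.1)
    (ae_of_all _ fun t => by simp [norm_exp_I_mul_mul])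

variable {ι : Type*} {T : ℝ} {R : Finset ι} {ν : ι → ℤ}

theorem invFourier_add_intCast_mul (hg : Integrable g) (hT : 0 < T) (hν : InjOn ν R)
    (hsupp : ∀ᵐ t, t ∉ ⋃ r ∈ R, Ioc (ν r * T) (ν r * T + T) → g t = 0) (x : ℝ) (k : ℤ) :
    invFourier g (x + k * (2 * π / T)) = ∫ s in (0)..T,
      exp (2 * π * I * k * s / T) * ∑ r ∈ R, exp (I * x * ↑(s + ν r * T)) * g (s + ν r * T) := by
  have hsupp' : ∀ᵐ t, t ∉ ⋃ r ∈ R, Ioc (ν r * T) (ν r * T + T) →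
      exp (I * ↑(x + k * (2 * π / T)) * t) * g t = 0 :=
    hsupp.mono fun t h ht => by rw [h ht, mul_zero]
  rw [invFourier, integral_eq_sum_intervalIntegral_comp_add (hg.exp_I_mul_mul _) hT.le
    (pairwiseDisjoint_Ioc_intCast_mul T hν) hsupp', ← intervalIntegral.integral_finsetSum]
  · congr 1 with s
    rw [Finset.mul_sum]
    exact Finset.sum_congr rfl fun r _ => by rw [exp_I_mul_add_intCast_mul hT.ne', mul_assoc]
  · exact fun r _ => ((hg.exp_I_mul_mul _).comp_add_right _).intervalIntegrable

theorem hasSum_norm_sq_invFourier_add_intCast_mul (hg : Integrable g) (hg2 : MemLp g 2)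
    (hT : 0 < T) (hν : InjOn ν R)
    (hsupp : ∀ᵐ t, t ∉ ⋃ r ∈ R, Ioc (ν r * T) (ν r * T + T) → g t = 0) (x : ℝ) :
    HasSum (fun k : ℤ => ‖invFourier g (x + k * (2 * π / T))‖ ^ 2)
      (T * ∫ s in (0)..T, ‖∑ r ∈ R, exp (I * x * ↑(s + ν r * T)) * g (s + ν r * T)‖ ^ 2) := by
  simp_rw [invFourier_add_intCast_mul hg hT hν hsupp]
  refine hasSum_norm_sq_intervalIntegral_exp_mul hT (memLp_finsetSum R fun r _ => ?_)
  exact ((hg2.exp_I_mul_mul x).comp_measurePreserving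
    (measurePreserving_add_right volume _)).restrict _

theorem mul_integral_norm_sq_le_sum_intervalIntegral {κ : Type*} {J : Finset κ}
    {M : κ → ι → ℂ} {C : ℝ}
    (hM : ∀ w : ι → ℂ, C * ∑ r ∈ R, ‖w r‖ ^ 2 ≤ ∑ j ∈ J, ‖∑ r ∈ R, M j r * w r‖ ^ 2)
    (hg2 : MemLp g 2) (hT : 0 ≤ T) (hν : InjOn ν R)
    (hsupp : ∀ᵐ t, t ∉ ⋃ r ∈ R, Ioc (ν r * T) (ν r * T + T) → g t = 0) :
    C * ∫ t, ‖g t‖ ^ 2 ≤ ∑ j ∈ J, ∫ s in (0)..T, ‖∑ r ∈ R, M j r * g (s + ν r * T)‖ ^ 2 := by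
  rw [integral_eq_sum_intervalIntegral_comp_add (hg2.integrable_norm_pow two_ne_zero) hT
    (pairwiseDisjoint_Ioc_intCast_mul T hν)
    (hsupp.mono fun t h ht => by rw [h ht, norm_zero, zero_pow two_ne_zero])]
  simp only [intervalIntegral.integral_of_le hT]
  exact mul_sum_integral_norm_sq_le hM fun r _ =>
    (hg2.comp_measurePreserving (measurePreserving_add_right volume _)).restrict _

theorem integral_norm_sq_invFourier (hg : Integrable g) (hg2 : MemLp g 2)
    (hsupp : ∀ᵐ t, t ∉ Ioc 0 (2 * π) → g t = 0) :
    ∫ x, ‖invFourier g x‖ ^ 2 = 2 * π * ∫ t, ‖g t‖ ^ 2 := by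
  have hsupp₀ : ∀ᵐ t, t ∉ ⋃ r ∈ ({0} : Finset ℤ), Ioc (r * (2 * π)) (r * (2 * π) + 2 * π) →
      g t = 0 := by
    simpa using hsupp
  have hnorm : ∫ t, ‖g t‖ ^ 2 = ∫ s in (0)..2 * π, ‖g s‖ ^ 2 := by
    rw [intervalIntegral.integral_of_le Real.two_pi_pos.le]
    exact (setIntegral_eq_integral_of_ae_compl_eq_zero
      (hsupp.mono fun t h ht => by rw [h ht, norm_zero, zero_pow two_ne_zero])).symm
  refine integral_eq_of_hasSum_comp_add_intCast
    ((continuous_invFourier hg).norm.pow 2).measurable (fun _ => sq_nonneg _) fun x => ?_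
  have := hasSum_norm_sq_invFourier_add_intCast_mul hg hg2 Real.two_pi_pos (injOn_id _) hsupp₀ x
  simpa [hnorm, norm_exp_I_mul_mul, Real.pi_ne_zero] using this

end InvFourier

section Blocks

variable {m : ℕ} {I : Finset (Fin m)} {g : ℝ → ℂ}

theorem ae_notMem_Ioc_blocks_of_notMem_Icc_blocks
    (hgS : ∀ t ∉ ⋃ r ∈ I, Icc (2 * π * (r : ℕ) / m) (2 * π * ((r : ℕ) + 1) / m), g t = 0) :
    ∀ᵐ t, t ∉ ⋃ r ∈ I, Ioc ((((r : ℕ) : ℤ) : ℝ) * (2 * π / m))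
      ((((r : ℕ) : ℤ) : ℝ) * (2 * π / m) + 2 * π / m) → g t = 0 := by
  have hend (r : Fin m) : Ioc (2 * π * (r : ℕ) / m) (2 * π * ((r : ℕ) + 1) / m)
      = Ioc ((((r : ℕ) : ℤ) : ℝ) * (2 * π / m))
          ((((r : ℕ) : ℤ) : ℝ) * (2 * π / m) + 2 * π / m) := by
    congr 1 <;> push_cast <;> ring
  simpa only [hend] using ae_notMem_iUnion_Ioc_of_notMem_iUnion_Icc hgS

theorem iUnion_Ioc_blocks_subset :
    ⋃ r ∈ I, Ioc ((((r : ℕ) : ℤ) : ℝ) * (2 * π / m))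
      ((((r : ℕ) : ℤ) : ℝ) * (2 * π / m) + 2 * π / m) ⊆ Ioc 0 (2 * π) := by
  intro t ht
  obtain ⟨r, -, h₁, h₂⟩ := mem_iUnion₂.1 ht
  have hm : (0 : ℝ) < m := by exact_mod_cast r.pos
  have hr : ((r : ℕ) : ℝ) + 1 ≤ m := by exact_mod_cast r.isLt
  refine ⟨lt_of_le_of_lt (by positivity) h₁, h₂.trans ?_⟩
  calc _ = ((r : ℕ) + 1 : ℝ) * (2 * π / m) := by push_cast; ring
    _ ≤ m * (2 * π / m) := by gcongr
    _ = 2 * π := by field_simp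

theorem hasSum_norm_sq_invFourier_natCast_add_mul (hg : Integrable g) (hg2 : MemLp g 2)
    (hsupp : ∀ᵐ t, t ∉ ⋃ r ∈ I, Ioc ((((r : ℕ) : ℤ) : ℝ) * (2 * π / m))
      ((((r : ℕ) : ℤ) : ℝ) * (2 * π / m) + 2 * π / m) → g t = 0) (j : Fin m) :
    HasSum (fun k : ℤ => ‖invFourier g (((j : ℕ) + k * m : ℤ) : ℝ)‖ ^ 2)
      (2 * π / m * ∫ s in (0)..2 * π / m, ‖∑ r ∈ I, exp (2 * π * Complex.I * (j : ℕ) * (r : ℕ) / m)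
        * g (s + (((r : ℕ) : ℤ) : ℝ) * (2 * π / m))‖ ^ 2) := by
  have hm : (0 : ℝ) < m := by exact_mod_cast j.pos
  have hν : InjOn (fun r : Fin m => ((r : ℕ) : ℤ)) I :=
    (Nat.cast_injective.comp Fin.val_injective).injOn
  have hsum := hasSum_norm_sq_invFourier_add_intCast_mul hg hg2 (by positivity) hν hsupp (j : ℕ)
  have hstep : 2 * π / (2 * π / m) = m := by field_simp
  have hphase (s : ℝ) (r : Fin m) :
      exp (Complex.I * ((j : ℕ) : ℝ) * ↑(s + (((r : ℕ) : ℤ) : ℝ) * (2 * π / m)))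
          * g (s + (((r : ℕ) : ℤ) : ℝ) * (2 * π / m))
        = exp (Complex.I * ((j : ℕ) : ℝ) * s) * (exp (2 * π * Complex.I * (j : ℕ) * (r : ℕ) / m)
          * g (s + (((r : ℕ) : ℤ) : ℝ) * (2 * π / m))) := by
    rw [← mul_assoc, ← exp_add]
    congr 2
    push_cast
    field_simp
  simp only [hstep, hphase, ← Finset.mul_sum, norm_mul, norm_exp_I_mul_mul, one_mul] at hsum
  refine hsum.congr_fun fun k => ?_
  push_cast
  rfl

end Blocks

theorem stmt_8_general (m n : ℕ) (I : Finset (Fin m))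
    (S : Set ℝ)
    (hS : S = ⋃ r ∈ I, Set.Icc (2 * Real.pi * (r : ℕ) / m) (2 * Real.pi * ((r : ℕ) + 1) / m))
    (J : Finset (Fin m)) (c : ℝ)
    (hmat : ∀ w : Fin m → ℂ,
      c * n * ∑ r ∈ I, ‖w r‖ ^ 2 ≤
        ∑ j ∈ J, ‖∑ r ∈ I,
          Complex.exp (2 * Real.pi * Complex.I * (j : ℕ) * (r : ℕ) / m) * w r‖ ^ 2)
    (Λ : Set ℤ) (hΛ : Λ = {l : ℤ | ∃ j ∈ J, ∃ k : ℤ, l = (j : ℕ) + k * m}) :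
    ∀ f : ℝ → ℂ, IsPW S f →
      c * ((n : ℝ) / m) * ∫ x : ℝ, ‖f x‖ ^ 2 ≤ ∑' l : Λ, ‖f ((l : ℤ) : ℝ)‖ ^ 2 := by
  rintro f ⟨g, hg, hg2, hgS, hf⟩
  obtain rfl : f = invFourier g := funext hf
  subst hS hΛ
  have hsupp := ae_notMem_Ioc_blocks_of_notMem_Icc_blocks hgS
  have hΛsum := hasSum_setOf_add_mul J (φ := fun l : ℤ => ‖invFourier g l‖ ^ 2)
    fun j _ => hasSum_norm_sq_invFourier_natCast_add_mul hg hg2 hsupp j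
  have hmatrix := mul_integral_norm_sq_le_sum_intervalIntegral hmat hg2 (by positivity)
    (Nat.cast_injective.comp Fin.val_injective).injOn hsupp
  rw [integral_norm_sq_invFourier hg hg2
      (hsupp.mono fun t h ht => h fun hmem => ht (iUnion_Ioc_blocks_subset hmem)),
    hΛsum.tsum_eq, ← Finset.mul_sum]
  calc c * (n / m) * (2 * π * ∫ t, ‖g t‖ ^ 2) = 2 * π / m * (c * n * ∫ t, ‖g t‖ ^ 2) := by ring
    _ ≤ _ := mul_le_mul_of_nonneg_left hmatrix (by positivity)

/-- a lower bound for the submatrix `F_I(J)` of the Fourier matrix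
yields the sampling bound `c·(n/m)` for `Λ = {j+km : j∈J, k∈ℤ}` on `PW_S`. -/
theorem stmt_8 (m n : ℕ) (hm : 0 < m) (I : Finset (Fin m)) (hI : I.card = n)
    (S : Set ℝ)
    (hS : S = ⋃ r ∈ I, Set.Icc (2 * Real.pi * (r : ℕ) / m) (2 * Real.pi * ((r : ℕ) + 1) / m))
    (J : Finset (Fin m)) (c : ℝ) (hc : 0 < c)
    (hmat : ∀ w : Fin m → ℂ,
      c * n * ∑ r ∈ I, ‖w r‖ ^ 2 ≤
        ∑ j ∈ J, ‖∑ r ∈ I,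
          Complex.exp (2 * Real.pi * Complex.I * (j : ℕ) * (r : ℕ) / m) * w r‖ ^ 2)
    (Λ : Set ℤ) (hΛ : Λ = {l : ℤ | ∃ j ∈ J, ∃ k : ℤ, l = (j : ℕ) + k * m}) :
    ∀ f : ℝ → ℂ, IsPW S f →
      c * ((n : ℝ) / m) * ∫ x : ℝ, ‖f x‖ ^ 2 ≤ ∑' l : Λ, ‖f ((l : ℤ) : ℝ)‖ ^ 2 :=
  stmt_8_general m n I S hS J c hmat Λ hΛ
end

section
/- (Ruzsa's theorem) Let H be a family of finite subsets of ℤ that is closed under translations and under taking subsets. Then the limit d(H) = lim_{n→∞} max_{A∈H}|A∩[-n,n]|/(2n) exists, and there exists Γ ⊆ ℤ with D^♯(Γ) = lim_{n→∞}|Γ∩[-n,n]|/(2n) = d(H) such that every finite subset of Γ belongs to H. -/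
open Filter Finset

/-!
Write `g t` for the largest number of elements a member of `H` has in a window `(a, a + t]`.
Translation invariance makes `g` subadditive, so by Fekete's lemma `g t / t` tends to
`d = inf g t / t`; the maximum over `[-n, n]` is `g (2n + 1)`, which gives the first limit.

For `Γ`, take `E ∈ H` with `g m` elements in `(0, m]`, `m` large. Every window of length `ℓ`
holds at most `(d + δ) ℓ + C` points of `E`, while `(0, m]` holds at least `d m`; a greedy
covering then shows that few points start or end a sparse window (length at least `n₀`, density
below `d - ε`). Translating a point that does neither to `0` gives a member of `H` that is dense
on both sides of `0` at every scale between `n₀` and `N`. An ultrafilter limit of such sets as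
`N → ∞` is `Γ`: each finite subset of `Γ` lies in one of them, hence in `H`, and `Γ` inherits
the lower density bounds, while `g` supplies the upper ones.
-/

def windowCard (A : Finset ℤ) (a b : ℤ) : ℕ := #{k ∈ A | a < k ∧ k ≤ b}

theorem windowCard_le_toNat (A : Finset ℤ) (a b : ℤ) : windowCard A a b ≤ (b - a).toNat := by
  rw [← Int.card_Ioc]
  exact card_le_card fun k hk => by simp_all

theorem windowCard_add (A : Finset ℤ) {a b c : ℤ} (hab : a ≤ b) (hbc : b ≤ c) :
    windowCard A a c = windowCard A a b + windowCard A b c := by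
  rw [windowCard, windowCard, windowCard, ← card_union_of_disjoint, ← filter_or]
  · congr 1
    exact filter_congr fun k _ => by omega
  · exact disjoint_filter.2 fun k _ _ => by omega

theorem windowCard_image_add (A : Finset ℤ) (t a b : ℤ) :
    windowCard (A.image (· + t)) a b = windowCard A (a - t) (b - t) := by
  rw [windowCard, windowCard, filter_image, card_image_of_injective _ (add_left_injective t)]
  congr 1
  exact filter_congr fun k _ => by omega

theorem card_filter_abs_le_eq_windowCard (A : Finset ℤ) (n : ℕ) :
    #{k ∈ A | |k| ≤ (n : ℤ)} = windowCard A (-n - 1) n := by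
  rw [windowCard]
  congr 1
  exact filter_congr fun k _ => by rw [abs_le]; omega

section Sparse

open scoped Classical

variable {μ : ℤ → ℤ → ℝ} {d δ ε C : ℝ} {n₀ : ℕ}

theorem card_sparse_starts_le (hε : 0 ≤ ε) (hδ : 0 ≤ δ) (hC : C ≤ δ * n₀)
    (hadd : ∀ a b c, a ≤ b → b ≤ c → μ a c = μ a b + μ b c)
    (hμ : ∀ a b, a ≤ b → μ a b ≤ (d + δ) * (b - a) + C) {a m : ℤ} (ham : a ≤ m) :
    ε * #{c ∈ Ico a m | ∃ n : ℕ, n₀ ≤ n ∧ c + n ≤ m ∧ μ c (c + n) < (d - ε) * n} ≤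
      C + (d + δ) * (m - a) - μ a m := by
  induction h : (m - a).toNat using Nat.strong_induction_on generalizing a with
  | _ k ih =>
  set S := fun a : ℤ => {c ∈ Ico a m | ∃ n : ℕ, n₀ ≤ n ∧ c + n ≤ m ∧ μ c (c + n) < (d - ε) * n}
  rcases (S a).eq_empty_or_nonempty with hS | hS
  · simp only [S] at hS
    rw [hS, card_empty, Nat.cast_zero, mul_zero]
    linarith [hμ a m ham]
  set r := (S a).min' hS
  have hr : r ∈ S a := min'_mem _ _
  simp only [S, mem_filter, mem_Ico] at hr
  obtain ⟨⟨har, -⟩, n, hn, hrm, hsparse⟩ := hr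
  have hn_pos : 0 < n := Nat.pos_of_ne_zero fun hn0 => by
    subst hn0
    have := hadd r r r le_rfl le_rfl
    simp only [Nat.cast_zero, add_zero, mul_zero] at hsparse
    linarith
  have hsub : S a ⊆ Ico r (r + n) ∪ S (r + n) := fun c hc => by
    have hrc : r ≤ c := min'_le _ _ hc
    simp only [S, mem_filter, mem_Ico, mem_union] at hc ⊢
    by_cases hcn : c < r + n
    · exact Or.inl ⟨hrc, hcn⟩
    · exact Or.inr ⟨⟨by omega, hc.1.2⟩, hc.2⟩
  have hcard : ε * #(S a) ≤ ε * n + ε * #(S (r + n)) := by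
    have := (card_le_card hsub).trans (card_union_le _ _)
    rw [Int.card_Ico, show r + n - r = (n : ℤ) by ring, Int.toNat_natCast] at this
    rw [← mul_add]
    exact mul_le_mul_of_nonneg_left (by exact_mod_cast this) hε
  have hrest := ih _ (by omega) hrm rfl
  have hgap := hμ a r har
  have hsplit₁ := hadd a r m har (by omega)
  have hsplit₂ := hadd r (r + n) m (by omega) hrm
  -- The gap `[a, r)` may cost `C`; the sparse run `[r, r + n)` repays it as `C ≤ δ * n₀ ≤ δ * n`.
  have hδn : δ * n₀ ≤ δ * n := mul_le_mul_of_nonneg_left (by exact_mod_cast hn) hδ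
  push_cast at hrest hgap ⊢
  linarith

theorem card_sparse_ends_le (hε : 0 ≤ ε) (hδ : 0 ≤ δ) (hC : C ≤ δ * n₀)
    (hadd : ∀ a b c, a ≤ b → b ≤ c → μ a c = μ a b + μ b c)
    (hμ : ∀ a b, a ≤ b → μ a b ≤ (d + δ) * (b - a) + C) {a m : ℤ} (ham : a ≤ m) :
    ε * #{c ∈ Ioc a m | ∃ n : ℕ, n₀ ≤ n ∧ a ≤ c - n ∧ μ (c - n) c < (d - ε) * n} ≤
      C + (d + δ) * (m - a) - μ a m := by
  have key := card_sparse_starts_le (μ := fun a b => μ (-b) (-a)) hε hδ hC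
    (fun a b c hab hbc => by rw [hadd (-c) (-b) (-a) (by omega) (by omega), add_comm])
    (fun a b hab => by have := hμ (-b) (-a) (by omega); push_cast at this; linarith)
    (neg_le_neg ham)
  have hcard : #{c ∈ Ioc a m | ∃ n : ℕ, n₀ ≤ n ∧ a ≤ c - n ∧ μ (c - n) c < (d - ε) * n} =
      #{c ∈ Ico (-m) (-a) | ∃ n : ℕ, n₀ ≤ n ∧ c + n ≤ -a ∧ μ (-(c + n)) (-c) < (d - ε) * n} := by
    refine card_nbij' (fun c => -c) (fun c => -c) ?_ ?_ (fun c _ => neg_neg c)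
      (fun c _ => neg_neg c)
    · intro c hc
      simp only [coe_filter, Set.mem_ofPred_eq, mem_Ioc, mem_Ico] at hc ⊢
      obtain ⟨⟨h1, h2⟩, n, hn, h3, h4⟩ := hc
      refine ⟨⟨by omega, by omega⟩, n, hn, by omega, ?_⟩
      rwa [neg_neg, show -(-c + n) = c - n by ring]
    · intro c hc
      simp only [coe_filter, Set.mem_ofPred_eq, mem_Ioc, mem_Ico] at hc ⊢
      obtain ⟨⟨h1, h2⟩, n, hn, h3, h4⟩ := hc
      refine ⟨⟨by omega, by omega⟩, n, hn, by omega, ?_⟩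
      rwa [show -c - n = -(c + n) by ring]
  rw [hcard]
  simp only [neg_neg, Int.cast_neg] at key
  linarith

end Sparse

noncomputable def maxWindowCard (H : Set (Finset ℤ)) (t : ℕ) : ℕ :=
  sSup ((fun A => windowCard A 0 t) '' H)

noncomputable def maxDensity (H : Set (Finset ℤ)) : ℝ :=
  sInf ((fun n : ℕ => (maxWindowCard H n : ℝ) / n) '' Set.Ici 1)

section MaxWindow

variable {H : Set (Finset ℤ)}

theorem bddAbove_windowCard_image (H : Set (Finset ℤ)) (t : ℕ) :
    BddAbove ((fun A => windowCard A 0 t) '' H) :=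
  ⟨t, Set.forall_mem_image.2 fun A _ => by simpa using windowCard_le_toNat A 0 t⟩

theorem maxWindowCard_le_self (H : Set (Finset ℤ)) (t : ℕ) : maxWindowCard H t ≤ t :=
  csSup_le' <| Set.forall_mem_image.2 fun A _ => by simpa using windowCard_le_toNat A 0 t

theorem exists_windowCard_eq_maxWindowCard (hne : H.Nonempty) (t : ℕ) :
    ∃ A ∈ H, windowCard A 0 t = maxWindowCard H t :=
  Nat.sSup_mem (hne.image _) (bddAbove_windowCard_image H t)

variable (htrans : ∀ A ∈ H, ∀ t : ℤ, A.image (· + t) ∈ H)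
include htrans

theorem windowCard_le_maxWindowCard {A : Finset ℤ} (hA : A ∈ H) {a b : ℤ} (hab : a ≤ b) :
    windowCard A a b ≤ maxWindowCard H (b - a).toNat := by
  refine le_csSup (bddAbove_windowCard_image H _) ⟨A.image (· + -a), htrans A hA (-a), ?_⟩
  change windowCard (A.image (· + -a)) _ _ = _
  rw [windowCard_image_add]
  congr 1 <;> omega

theorem card_le_maxWindowCard {A : Finset ℤ} (hA : A ∈ H) {a b : ℤ} (hAab : A ⊆ Ioc a b) :
    #A ≤ maxWindowCard H (b - a).toNat := by
  rcases A.eq_empty_or_nonempty with rfl | ⟨k, hk⟩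
  · simp
  have hab : a ≤ b := by have := mem_Ioc.1 (hAab hk); omega
  calc #A = windowCard A a b := by
        rw [windowCard, filter_true_of_mem fun k hk => mem_Ioc.1 (hAab hk)]
    _ ≤ maxWindowCard H (b - a).toNat := windowCard_le_maxWindowCard htrans hA hab

theorem maxWindowCard_add_le (s t : ℕ) :
    maxWindowCard H (s + t) ≤ maxWindowCard H s + maxWindowCard H t := by
  refine csSup_le' (Set.forall_mem_image.2 fun A hA => ?_)
  have h₁ := windowCard_le_maxWindowCard htrans hA (a := 0) (b := s) (by omega)
  have h₂ := windowCard_le_maxWindowCard htrans hA (a := s) (b := s + t) (by omega)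
  rw [show ((s + t : ℕ) : ℤ) = s + t by push_cast; ring,
    windowCard_add A (b := s) (by omega) (by omega)]
  simp only [sub_zero, Int.toNat_natCast, add_sub_cancel_left] at h₁ h₂
  omega

theorem subadditive_maxWindowCard : Subadditive (fun n ↦ (maxWindowCard H n : ℝ)) :=
  fun s t ↦ by simpa using (Nat.cast_le (α := ℝ)).2 (maxWindowCard_add_le htrans s t)

theorem maxDensity_eq_lim : maxDensity H = (subadditive_maxWindowCard htrans).lim := by
  rw [Subadditive.lim]; rfl

omit htrans in
theorem bddBelow_maxWindowCard_div :
    BddBelow (Set.range fun n : ℕ ↦ (maxWindowCard H n : ℝ) / n) :=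
  ⟨0, Set.forall_mem_range.2 fun _ ↦ by positivity⟩

theorem tendsto_maxWindowCard_div :
    Tendsto (fun n : ℕ ↦ (maxWindowCard H n : ℝ) / n) atTop (nhds (maxDensity H)) :=
  maxDensity_eq_lim htrans ▸
    (subadditive_maxWindowCard htrans).tendsto_lim bddBelow_maxWindowCard_div

theorem maxDensity_mul_le (n : ℕ) : maxDensity H * n ≤ maxWindowCard H n := by
  rcases Nat.eq_zero_or_pos n with rfl | hn
  · simp
  · rw [← le_div_iff₀ (by positivity), maxDensity_eq_lim htrans]
    exact (subadditive_maxWindowCard htrans).lim_le_div bddBelow_maxWindowCard_div hn.ne'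

theorem maxDensity_nonneg : 0 ≤ maxDensity H :=
  ge_of_tendsto' (tendsto_maxWindowCard_div htrans) fun _ ↦ by positivity

theorem exists_maxWindowCard_le_linear {δ : ℝ} (hδ : 0 < δ) :
    ∃ C : ℝ, ∀ t : ℕ, (maxWindowCard H t : ℝ) ≤ (maxDensity H + δ) * t + C := by
  obtain ⟨M, hM⟩ := (((tendsto_maxWindowCard_div htrans).eventually
    (gt_mem_nhds (lt_add_of_pos_right _ hδ))).and (eventually_gt_atTop 0)).exists
  refine ⟨M, fun t => ?_⟩
  have hMpos : (0 : ℝ) < M := by exact_mod_cast hM.2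
  have hgM : (maxWindowCard H M : ℝ) ≤ (maxDensity H + δ) * M := by
    have := hM.1; rw [div_lt_iff₀ hMpos] at this; exact this.le
  have hsplit := (subadditive_maxWindowCard htrans).apply_mul_add_le (t / M) M (t % M)
  rw [Nat.div_add_mod'] at hsplit
  have hr : (maxWindowCard H (t % M) : ℝ) ≤ M := by
    exact_mod_cast (maxWindowCard_le_self H _).trans (Nat.mod_lt t hM.2).le
  have hq : ((t / M : ℕ) : ℝ) * M ≤ t := by exact_mod_cast Nat.div_mul_le_self t M
  have hdδ : 0 ≤ maxDensity H + δ := by linarith [maxDensity_nonneg htrans]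
  calc (maxWindowCard H t : ℝ)
      ≤ (t / M : ℕ) * maxWindowCard H M + maxWindowCard H (t % M) := hsplit
    _ ≤ (t / M : ℕ) * ((maxDensity H + δ) * M) + M := by gcongr
    _ = (maxDensity H + δ) * ((t / M : ℕ) * M) + M := by ring
    _ ≤ (maxDensity H + δ) * t + M := by gcongr

theorem sSup_card_filter_abs_le (hne : H.Nonempty) (n : ℕ) :
    sSup {x : ℝ | ∃ A ∈ H, x = #{k ∈ A | |k| ≤ (n : ℤ)}} = maxWindowCard H (2 * n + 1) := by
  refine IsGreatest.csSup_eq ⟨?_, ?_⟩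
  · obtain ⟨E, hE, hEm⟩ := exists_windowCard_eq_maxWindowCard hne (2 * n + 1)
    refine ⟨E.image (· + (-n - 1)), htrans E hE _, ?_⟩
    rw [card_filter_abs_le_eq_windowCard, windowCard_image_add, ← hEm]
    congr 2 <;> push_cast <;> ring
  · rintro x ⟨A, hA, rfl⟩
    rw [card_filter_abs_le_eq_windowCard]
    have := windowCard_le_maxWindowCard htrans hA (a := -n - 1) (b := n) (by omega)
    rw [show ((n : ℤ) - (-n - 1)).toNat = 2 * n + 1 by omega] at this
    exact_mod_cast this

theorem tendsto_maxWindowCard_two_mul_add_one_div :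
    Tendsto (fun n : ℕ ↦ (maxWindowCard H (2 * n + 1) : ℝ) / (2 * n)) atTop
      (nhds (maxDensity H)) := by
  have hodd : Tendsto (fun n : ℕ ↦ 2 * n + 1) atTop atTop :=
    tendsto_atTop_mono (fun n => (by omega : n ≤ 2 * n + 1)) tendsto_id
  have hratio : Tendsto (fun n : ℕ ↦ ((2 * n : ℕ) : ℝ) / ((2 * n : ℕ) + 1)) atTop (nhds 1) :=
    (tendsto_natCast_div_add_atTop (1 : ℝ)).comp
      (tendsto_atTop_mono (fun n => (by omega : n ≤ 2 * n)) tendsto_id)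
  have := ((tendsto_maxWindowCard_div htrans).comp hodd).div hratio one_ne_zero
  rw [div_one] at this
  refine this.congr' ((eventually_gt_atTop 0).mono fun n hn => ?_)
  simp only [Pi.div_apply, Function.comp_apply]
  push_cast
  field_simp

end MaxWindow

def IsDenseNearZero (A : Finset ℤ) (d ε : ℝ) (n₀ N : ℕ) : Prop :=
  ∀ n : ℕ, n₀ ≤ n → n ≤ N → (d - ε) * n ≤ windowCard A (-n) 0 ∧ (d - ε) * n ≤ windowCard A 0 n

open scoped Classical in
noncomputable def sparsePoints (E : Finset ℤ) (d ε : ℝ) (n₀ m : ℕ) : Finset ℤ :=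
  {c ∈ Ico 0 (m : ℤ) | ∃ n : ℕ, n₀ ≤ n ∧ c + n ≤ (m : ℤ) ∧
    (windowCard E c (c + n) : ℝ) < (d - ε) * n} ∪
  {c ∈ Ioc 0 (m : ℤ) | ∃ n : ℕ, n₀ ≤ n ∧ (0 : ℤ) ≤ c - n ∧
    (windowCard E (c - n) c : ℝ) < (d - ε) * n}

theorem isDenseNearZero_image_add_neg {E : Finset ℤ} {d ε : ℝ} {n₀ m N : ℕ} {c : ℤ}
    (hc : (N : ℤ) < c ∧ c < m - N) (hcE : c ∉ sparsePoints E d ε n₀ m) :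
    IsDenseNearZero (E.image (· + -c)) d ε n₀ N := by
  intro n hn hnN
  simp only [sparsePoints, mem_union, mem_filter, mem_Ico, mem_Ioc, not_or, not_and,
    not_exists, not_lt] at hcE
  rw [windowCard_image_add, windowCard_image_add, show -(n : ℤ) - -c = c - n by ring,
    show (0 : ℤ) - -c = c by ring, show (n : ℤ) - -c = c + n by ring]
  exact ⟨hcE.2 ⟨by omega, by omega⟩ n hn (by omega), hcE.1 ⟨by omega, by omega⟩ n hn (by omega)⟩

theorem Ultrafilter.eventually_forall_finset_iff_eventually {α ι : Type*} (U : Ultrafilter ι)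
    (p : ι → α → Prop) (W : Finset α) : ∀ᶠ i in U, ∀ k ∈ W, (p i k ↔ ∀ᶠ j in U, p j k) := by
  refine (eventually_all_finset W).2 fun k _ => ?_
  by_cases hk : ∀ᶠ j in U, p j k
  · filter_upwards [hk] with i hi using iff_of_true hi hk
  · filter_upwards [Ultrafilter.eventually_not.2 hk] with i hi using iff_of_false hi hk

open scoped Classical in
theorem natCard_setOf_mem_abs_le (Γ : Set ℤ) (n : ℕ) :
    Nat.card {k : ℤ | k ∈ Γ ∧ |k| ≤ (n : ℤ)} = #{k ∈ Icc (-n : ℤ) n | k ∈ Γ} := by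
  have : {k : ℤ | k ∈ Γ ∧ |k| ≤ (n : ℤ)} = ↑({k ∈ Icc (-n : ℤ) n | k ∈ Γ}) := by
    ext k
    simp only [coe_filter, mem_Icc, Set.mem_ofPred_eq, abs_le]
    tauto
  rw [this, Nat.card_coe_set_eq, Set.ncard_coe_finset]

section Dense

open scoped Classical

variable {H : Set (Finset ℤ)} (htrans : ∀ A ∈ H, ∀ t : ℤ, A.image (· + t) ∈ H)
include htrans

theorem card_sparsePoints_le {E : Finset ℤ} (hE : E ∈ H) {m : ℕ}
    (hEm : windowCard E 0 m = maxWindowCard H m) {δ ε C : ℝ} {n₀ : ℕ}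
    (hε : 0 ≤ ε) (hδ : 0 ≤ δ) (hC : C ≤ δ * n₀)
    (hlin : ∀ t : ℕ, (maxWindowCard H t : ℝ) ≤ (maxDensity H + δ) * t + C) :
    ε * #(sparsePoints E (maxDensity H) ε n₀ m) ≤ 2 * (C + δ * m) := by
  have hadd (a b c : ℤ) (hab : a ≤ b) (hbc : b ≤ c) :
      (windowCard E a c : ℝ) = windowCard E a b + windowCard E b c := by
    exact_mod_cast windowCard_add E hab hbc
  have hμ (a b : ℤ) (hab : a ≤ b) :
      (windowCard E a b : ℝ) ≤ (maxDensity H + δ) * (b - a) + C := by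
    have h₁ : (windowCard E a b : ℝ) ≤ maxWindowCard H (b - a).toNat := by
      exact_mod_cast windowCard_le_maxWindowCard htrans hE hab
    have h₂ := hlin (b - a).toNat
    rw [show (((b - a).toNat : ℕ) : ℝ) = b - a by
      rw [← Int.cast_natCast, Int.toNat_of_nonneg (sub_nonneg.2 hab), Int.cast_sub]] at h₂
    linarith
  have htot : maxDensity H * m ≤ windowCard E 0 m := hEm ▸ maxDensity_mul_le htrans m
  have hfwd := card_sparse_starts_le (μ := fun a b => (windowCard E a b : ℝ)) hε hδ hC hadd hμ
    (Int.natCast_nonneg m)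
  have hbwd := card_sparse_ends_le (μ := fun a b => (windowCard E a b : ℝ)) hε hδ hC hadd hμ
    (Int.natCast_nonneg m)
  have hunion := (Nat.cast_le (α := ℝ)).2 (card_union_le _ _ :
    #(sparsePoints E (maxDensity H) ε n₀ m) ≤ _)
  push_cast at hfwd hbwd hunion
  rw [sparsePoints]
  linarith [mul_le_mul_of_nonneg_left hunion hε]

theorem card_biUnion_sparsePoints_le {E : Finset ℤ} (hE : E ∈ H) {m : ℕ}
    (hEm : windowCard E 0 m = maxWindowCard H m) {ε δ C : ℕ → ℝ} {n₀ : ℕ → ℕ}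
    (hε : ∀ j, 0 < ε j) (hδ : ∀ j, 0 ≤ δ j) (hδε : ∀ j, 8 * δ j ≤ ε j * (1 / 2) ^ j)
    (hC : ∀ j, C j ≤ δ j * n₀ j)
    (hlin : ∀ j (t : ℕ), (maxWindowCard H t : ℝ) ≤ (maxDensity H + δ j) * t + C j) (N : ℕ) :
    (#((range (N + 1)).biUnion fun j => sparsePoints E (maxDensity H) (ε j) (n₀ j) m) : ℝ) ≤
      ∑ j ∈ range (N + 1), 2 * C j / ε j + m / 2 := by
  have hj (j : ℕ) : (#(sparsePoints E (maxDensity H) (ε j) (n₀ j) m) : ℝ) ≤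
      2 * C j / ε j + m / 4 * (1 / 2) ^ j := by
    have h := card_sparsePoints_le htrans hE hEm (hε j).le (hδ j) (hC j) (hlin j)
    rw [← le_div_iff₀' (hε j), mul_add, add_div] at h
    have : 2 * (δ j * m) / ε j ≤ m / 4 * (1 / 2) ^ j := by
      rw [div_le_iff₀ (hε j)]
      nlinarith [hδε j, (Nat.cast_nonneg m : (0 : ℝ) ≤ m)]
    linarith
  have hgeom : ∑ j ∈ range (N + 1), (m : ℝ) / 4 * (1 / 2) ^ j ≤ m / 2 := by
    rw [← mul_sum]
    nlinarith [sum_geometric_two_le (N + 1), (Nat.cast_nonneg m : (0 : ℝ) ≤ m)]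
  calc _ ≤ ∑ j ∈ range (N + 1), (#(sparsePoints E (maxDensity H) (ε j) (n₀ j) m) : ℝ) := by
        exact_mod_cast card_biUnion_le
    _ ≤ ∑ j ∈ range (N + 1), (2 * C j / ε j + m / 4 * (1 / 2) ^ j) := sum_le_sum fun j _ => hj j
    _ ≤ _ := by rw [sum_add_distrib]; linarith

theorem exists_isDenseNearZero_translate (hne : H.Nonempty) {ε δ C : ℕ → ℝ} {n₀ : ℕ → ℕ}
    (hε : ∀ j, 0 < ε j) (hδ : ∀ j, 0 ≤ δ j) (hδε : ∀ j, 8 * δ j ≤ ε j * (1 / 2) ^ j)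
    (hC : ∀ j, C j ≤ δ j * n₀ j)
    (hlin : ∀ j (t : ℕ), (maxWindowCard H t : ℝ) ≤ (maxDensity H + δ j) * t + C j) (N : ℕ) :
    ∃ A ∈ H, ∀ j ≤ N, IsDenseNearZero A (maxDensity H) (ε j) (n₀ j) N := by
  set K := ∑ j ∈ range (N + 1), 2 * C j / ε j
  have hK : 0 ≤ K := sum_nonneg fun j _ => by
    have := hlin j 0
    simp only [Nat.cast_zero, mul_zero, zero_add] at this
    exact div_nonneg (by linarith [(Nat.cast_nonneg _ : (0 : ℝ) ≤ maxWindowCard H 0)]) (hε j).le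
  obtain ⟨m, hm⟩ := exists_nat_gt (2 * K + 4 * N + 4)
  obtain ⟨E, hE, hEm⟩ := exists_windowCard_eq_maxWindowCard hne m
  set S := (range (N + 1)).biUnion fun j => sparsePoints E (maxDensity H) (ε j) (n₀ j) m
  have hS : (#S : ℝ) + 2 * N + 1 < m := by
    linarith [card_biUnion_sparsePoints_le htrans hE hEm hε hδ hδε hC hlin N]
  have hcount : #S < #(Ioo (N : ℤ) (m - N)) := by
    have : #S + 2 * N + 1 < m := by exact_mod_cast hS
    rw [Int.card_Ioo]
    omega
  obtain ⟨c, hc, hcS⟩ := exists_mem_notMem_of_card_lt_card hcount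
  refine ⟨E.image (· + -c), htrans E hE (-c), fun j hj => ?_⟩
  exact isDenseNearZero_image_add_neg (mem_Ioo.1 hc)
    fun h => hcS (mem_biUnion.2 ⟨j, mem_range.2 (by omega), h⟩)

theorem exists_seq_isDenseNearZero (hne : H.Nonempty) {ε : ℕ → ℝ} (hε : ∀ j, 0 < ε j) :
    ∃ (n₀ : ℕ → ℕ) (A : ℕ → Finset ℤ), (∀ i, A i ∈ H) ∧
      ∀ i, ∀ j ≤ i, IsDenseNearZero (A i) (maxDensity H) (ε j) (n₀ j) i := by
  set δ : ℕ → ℝ := fun j => ε j * (1 / 2) ^ j / 8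
  have hδ (j : ℕ) : 0 < δ j := by have := hε j; positivity
  choose C hC using fun j => exists_maxWindowCard_le_linear htrans (hδ j)
  have hCn (j : ℕ) : C j ≤ δ j * ⌈C j / δ j⌉₊ := by
    rw [← div_le_iff₀' (hδ j)]
    exact Nat.le_ceil _
  choose A hAH hA using exists_isDenseNearZero_translate htrans hne hε (fun j => (hδ j).le)
    (fun j => by simp only [δ]; linarith) hCn hC
  exact ⟨_, A, hAH, hA⟩

theorem tendsto_natCard_div_of_forall_finset_subset_mem {Γ : Set ℤ}
    (hΓ : ∀ F : Finset ℤ, ↑F ⊆ Γ → F ∈ H)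
    (hlow : ∀ ε > 0, ∀ᶠ n : ℕ in atTop,
      2 * (maxDensity H - ε) * n ≤ Nat.card {k : ℤ | k ∈ Γ ∧ |k| ≤ (n : ℤ)}) :
    Tendsto (fun n : ℕ => (Nat.card {k : ℤ | k ∈ Γ ∧ |k| ≤ (n : ℤ)} : ℝ) / (2 * n)) atTop
      (nhds (maxDensity H)) := by
  rw [tendsto_order]
  refine ⟨fun a ha => ?_, fun a ha => ?_⟩
  · filter_upwards [hlow ((maxDensity H - a) / 2) (by linarith), eventually_gt_atTop 0]
      with n hn hn0
    have : (0 : ℝ) < n := by exact_mod_cast hn0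
    rw [lt_div_iff₀ (by positivity)]
    nlinarith
  · filter_upwards [(tendsto_maxWindowCard_two_mul_add_one_div htrans).eventually (gt_mem_nhds ha)]
      with n hn
    refine lt_of_le_of_lt ?_ hn
    set F := {k ∈ Icc (-n : ℤ) n | k ∈ Γ}
    have hFH : F ∈ H := hΓ F fun k hk => (mem_filter.1 hk).2
    have hF := card_le_maxWindowCard htrans hFH (a := -n - 1) (b := n) fun k hk => by
      rw [mem_Ioc]; have := (mem_Icc.1 (mem_filter.1 hk).1); omega
    rw [show ((n : ℤ) - (-n - 1)).toNat = 2 * n + 1 by omega, ← natCard_setOf_mem_abs_le] at hF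
    gcongr

theorem exists_finset_subset_mem_and_eventually_dense (hne : H.Nonempty)
    (hhered : ∀ A ∈ H, ∀ B ⊆ A, B ∈ H) :
    ∃ Γ : Set ℤ, (∀ F : Finset ℤ, ↑F ⊆ Γ → F ∈ H) ∧ ∀ ε > 0, ∀ᶠ n : ℕ in atTop,
      2 * (maxDensity H - ε) * n ≤ Nat.card {k : ℤ | k ∈ Γ ∧ |k| ≤ (n : ℤ)} := by
  obtain ⟨n₀, A, hAH, hA⟩ :=
    exists_seq_isDenseNearZero htrans hne (ε := fun j : ℕ => 1 / (j + 1)) fun j => by positivity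
  set U := Ultrafilter.of (atTop : Filter ℕ)
  set Γ : Set ℤ := {k | ∀ᶠ i in (U : Filter ℕ), k ∈ A i}
  refine ⟨Γ, fun F hF => ?_, fun ε hε => ?_⟩
  · obtain ⟨i, hi⟩ := ((eventually_all_finset F).2 fun k hk => hF hk).exists
    exact hhered _ (hAH i) F hi
  obtain ⟨j, hj⟩ := exists_nat_one_div_lt hε
  filter_upwards [eventually_ge_atTop (n₀ j)] with n hn
  obtain ⟨i, hi, hji⟩ := ((U.eventually_forall_finset_iff_eventually (fun i k => k ∈ A i)
    (Icc (-n) n)).and (Ultrafilter.of_le atTop (eventually_ge_atTop (max j n)))).exists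
  obtain ⟨hneg, hpos⟩ := hA i j (by omega) n hn (by omega)
  have hcount : windowCard (A i) (-n) n ≤ Nat.card {k : ℤ | k ∈ Γ ∧ |k| ≤ (n : ℤ)} := by
    rw [natCard_setOf_mem_abs_le]
    refine card_le_card fun k hk => ?_
    simp only [mem_filter, mem_Icc] at hk ⊢
    have hkn : -(n : ℤ) ≤ k ∧ k ≤ n := ⟨by omega, hk.2.2⟩
    exact ⟨hkn, (hi k (mem_Icc.2 hkn)).1 hk.1⟩
  rw [windowCard_add _ (by omega : -(n : ℤ) ≤ 0) (by omega)] at hcount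
  have : (1 : ℝ) / (j + 1) * n ≤ ε * n := by gcongr
  have hcount' : (windowCard (A i) (-n) 0 : ℝ) + windowCard (A i) 0 n ≤
      Nat.card {k : ℤ | k ∈ Γ ∧ |k| ≤ (n : ℤ)} := by exact_mod_cast hcount
  linarith

end Dense

/-- Ruzsa's theorem: if `H` is a nonempty family of finite subsets of
`ℤ` closed under translations and under taking subsets, then
`d(H) = lim_n max_{A∈H}|A∩[-n,n]|/(2n)` exists and there is `Γ ⊆ ℤ` with
`lim_n |Γ∩[-n,n]|/(2n) = d(H)` all of whose finite subsets belong to `H`. -/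
theorem stmt_12 (H : Set (Finset ℤ)) (hne : H.Nonempty)
    (htrans : ∀ A ∈ H, ∀ t : ℤ, A.image (· + t) ∈ H)
    (hhered : ∀ A ∈ H, ∀ B ⊆ A, B ∈ H) :
    ∃ dH : ℝ,
      Tendsto (fun n : ℕ =>
          sSup {x : ℝ | ∃ A ∈ H, x = ((A.filter fun k : ℤ => |k| ≤ (n : ℤ)).card : ℝ)} /
            (2 * n))
        atTop (nhds dH) ∧
      ∃ Γ : Set ℤ,
        Tendsto (fun n : ℕ =>
            (Nat.card {k : ℤ | k ∈ Γ ∧ |k| ≤ (n : ℤ)} : ℝ) / (2 * n)) atTop (nhds dH) ∧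
        ∀ F : Finset ℤ, ↑F ⊆ Γ → F ∈ H := by
  obtain ⟨Γ, hΓH, hΓ⟩ := exists_finset_subset_mem_and_eventually_dense htrans hne hhered
  refine ⟨maxDensity H, ?_, Γ, tendsto_natCard_div_of_forall_finset_subset_mem htrans hΓH hΓ, hΓH⟩
  simpa only [sSup_card_filter_abs_le htrans hne] using
    tendsto_maxWindowCard_two_mul_add_one_div htrans
end
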